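/- arXiv:2404.07784 — 4 statements merged into one kernel-verified Lean document; each statement's English description precedes it below -/
import Mathlib

section
/- Let ν ∈ ℝ³ be a unit vector, let τ ∈ ℝ³ satisfy ⟨τ,ν⟩ = 0, and let m ∈ ℝ. Then (S·τ − i m β(α·ν))² = (|τ|² + m²) I₄. -/
open Matrix Complex

noncomputable section

/-- Pauli matrix σ₁. -/
def sigma1 : Matrix (Fin 2) (Fin 2) ℂ := !![0, 1; 1, 0]

/-- Pauli matrix σ₂. -/
def sigma2 : Matrix (Fin 2) (Fin 2) ℂ := !![0, -Complex.I; Complex.I, 0]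

/-- Pauli matrix σ₃. -/
def sigma3 : Matrix (Fin 2) (Fin 2) ℂ := !![1, 0; 0, -1]

/-- The Dirac matrices α₁, α₂, α₃ in 2×2-block form `[[0, σⱼ],[σⱼ, 0]]`. -/
def diracAlpha : Fin 3 → Matrix (Fin 4) (Fin 4) ℂ :=
  ![Matrix.reindex finSumFinEquiv finSumFinEquiv (Matrix.fromBlocks 0 sigma1 sigma1 0),
    Matrix.reindex finSumFinEquiv finSumFinEquiv (Matrix.fromBlocks 0 sigma2 sigma2 0),
    Matrix.reindex finSumFinEquiv finSumFinEquiv (Matrix.fromBlocks 0 sigma3 sigma3 0)]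

/-- The Dirac matrix β = `[[I₂, 0],[0, −I₂]]`. -/
def diracBeta : Matrix (Fin 4) (Fin 4) ℂ :=
  Matrix.reindex finSumFinEquiv finSumFinEquiv
    (Matrix.fromBlocks (1 : Matrix (Fin 2) (Fin 2) ℂ) 0 0 (-1 : Matrix (Fin 2) (Fin 2) ℂ))

/-- α·x = x₁α₁ + x₂α₂ + x₃α₃. -/
def alphaDot (x : Fin 3 → ℝ) : Matrix (Fin 4) (Fin 4) ℂ :=
  (x 0 : ℂ) • diracAlpha 0 + (x 1 : ℂ) • diracAlpha 1 + (x 2 : ℂ) • diracAlpha 2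

/-- Euclidean inner product on ℝ³. -/
def inner3 (X Y : Fin 3 → ℝ) : ℝ := X 0 * Y 0 + X 1 * Y 1 + X 2 * Y 2

/-- Euclidean norm on ℝ³. -/
def norm3 (X : Fin 3 → ℝ) : ℝ := Real.sqrt (inner3 X X)

/-- Cross product on ℝ³. -/
def cross3 (X Y : Fin 3 → ℝ) : Fin 3 → ℝ :=
  ![X 1 * Y 2 - X 2 * Y 1, X 2 * Y 0 - X 0 * Y 2, X 0 * Y 1 - X 1 * Y 0]

/-- γ₅ := −i α₁α₂α₃. -/
def gamma5 : Matrix (Fin 4) (Fin 4) ℂ :=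
  (-Complex.I) • (diracAlpha 0 * diracAlpha 1 * diracAlpha 2)

/-- S·X := −γ₅ (α·X). -/
def sDot (X : Fin 3 → ℝ) : Matrix (Fin 4) (Fin 4) ℂ := -(gamma5 * alphaDot X)

/-- P₊ := (I₄ − iβ(α·ν))/2. -/
def Pplus (ν : Fin 3 → ℝ) : Matrix (Fin 4) (Fin 4) ℂ :=
  ((1 : ℂ) / 2) • (1 - Complex.I • (diracBeta * alphaDot ν))

/-- P₋ := (I₄ + iβ(α·ν))/2. -/
def Pminus (ν : Fin 3 → ℝ) : Matrix (Fin 4) (Fin 4) ℂ :=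
  ((1 : ℂ) / 2) • (1 + Complex.I • (diracBeta * alphaDot ν))

/-- λ := √(|ν × ξ|² + 1). -/
def lam (ν ξ : Fin 3 → ℝ) : ℝ :=
  Real.sqrt (inner3 (cross3 ν ξ) (cross3 ν ξ) + 1)

/-- Π₊ := (1/2)(I₄ + λ⁻¹(S·τ − iβ(α·ν))), τ = ν × ξ. -/
def Piplus (ν ξ : Fin 3 → ℝ) : Matrix (Fin 4) (Fin 4) ℂ :=
  ((1 : ℂ) / 2) •
    (1 + ((lam ν ξ : ℂ))⁻¹ • (sDot (cross3 ν ξ) - Complex.I • (diracBeta * alphaDot ν)))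

/-- Π₋ := (1/2)(I₄ − λ⁻¹(S·τ − iβ(α·ν))), τ = ν × ξ. -/
def Piminus (ν ξ : Fin 3 → ℝ) : Matrix (Fin 4) (Fin 4) ℂ :=
  ((1 : ℂ) / 2) •
    (1 - ((lam ν ξ : ℂ))⁻¹ • (sDot (cross3 ν ξ) - Complex.I • (diracBeta * alphaDot ν)))

/-- ρ₊ := (i⟨ν,ξ⟩ + λ)/s. -/
def rhoP (ν ξ : Fin 3 → ℝ) (s : ℝ) : ℂ :=
  (Complex.I * (inner3 ν ξ : ℂ) + (lam ν ξ : ℂ)) / (s : ℂ)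

/-- ρ₋ := (i⟨ν,ξ⟩ − λ)/s. -/
def rhoM (ν ξ : Fin 3 → ℝ) (s : ℝ) : ℂ :=
  (Complex.I * (inner3 ν ξ : ℂ) - (lam ν ξ : ℂ)) / (s : ℂ)

/-- L₀ := s⁻¹ (iα·ν)(α·ξ + β). -/
def L0 (ν ξ : Fin 3 → ℝ) (s : ℝ) : Matrix (Fin 4) (Fin 4) ℂ :=
  ((s : ℂ))⁻¹ • ((Complex.I • alphaDot ν) * (alphaDot ξ + diracBeta))

/-- k₊ := (1 + λ⁻¹)/2. -/
def kPlus (ν ξ : Fin 3 → ℝ) : ℝ := (1 + (lam ν ξ)⁻¹) / 2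

/-- k₋ := (1 − λ⁻¹)/2. -/
def kMinus (ν ξ : Fin 3 → ℝ) : ℝ := (1 - (lam ν ξ)⁻¹) / 2

/-- Θ := (2λ)⁻¹ S·τ, τ = ν × ξ. -/
def theta (ν ξ : Fin 3 → ℝ) : Matrix (Fin 4) (Fin 4) ℂ :=
  ((2 * lam ν ξ : ℝ) : ℂ)⁻¹ • sDot (cross3 ν ξ)

/-- The fundamental solution φ_{m,z,w} of the free Dirac operator. -/
def phiFS (m : ℝ) (z w : ℂ) (x : Fin 3 → ℝ) : Matrix (Fin 4) (Fin 4) ℂ :=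
  (Complex.exp (Complex.I * w * (norm3 x : ℂ)) / (4 * (Real.pi : ℂ) * (norm3 x : ℂ))) •
    (z • (1 : Matrix (Fin 4) (Fin 4) ℂ) + (m : ℂ) • diracBeta +
      ((1 - Complex.I * w * (norm3 x : ℂ)) * Complex.I / ((norm3 x : ℂ) ^ 2)) • alphaDot x)


private lemma v3aux : (3 : Fin 4).val = 3 := rfl

private lemma dA0_eq : diracAlpha 0 = !![0,0,0,1; 0,0,1,0; 0,1,0,0; 1,0,0,0] := by
  ext i j
  fin_cases i <;> fin_cases j <;>
    simp (config := { decide := true }) [diracAlpha, sigma1, Matrix.reindex_apply,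
      Matrix.submatrix_apply, finSumFinEquiv, Fin.addCases, Matrix.fromBlocks,
      Fin.subNat, Fin.castLT, v3aux, Matrix.vecHead, Matrix.vecTail]

private lemma dA1_eq : diracAlpha 1 =
    !![0,0,0,-Complex.I; 0,0,Complex.I,0; 0,-Complex.I,0,0; Complex.I,0,0,0] := by
  ext i j
  fin_cases i <;> fin_cases j <;>
    simp (config := { decide := true }) [diracAlpha, sigma2, Matrix.reindex_apply,
      Matrix.submatrix_apply, finSumFinEquiv, Fin.addCases, Matrix.fromBlocks,
      Fin.subNat, Fin.castLT, v3aux, Matrix.vecHead, Matrix.vecTail]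

private lemma dA2_eq : diracAlpha 2 = !![0,0,1,0; 0,0,0,-1; 1,0,0,0; 0,-1,0,0] := by
  ext i j
  fin_cases i <;> fin_cases j <;>
    simp (config := { decide := true }) [diracAlpha, sigma3, Matrix.reindex_apply,
      Matrix.submatrix_apply, finSumFinEquiv, Fin.addCases, Matrix.fromBlocks,
      Fin.subNat, Fin.castLT, v3aux, Matrix.vecHead, Matrix.vecTail]

private lemma betaM_eq : diracBeta = !![1,0,0,0; 0,1,0,0; 0,0,-1,0; 0,0,0,-1] := by
  ext i j
  fin_cases i <;> fin_cases j <;>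
    simp (config := { decide := true }) [diracBeta, Matrix.reindex_apply,
      Matrix.submatrix_apply, finSumFinEquiv, Fin.addCases, Matrix.fromBlocks,
      Fin.subNat, Fin.castLT, v3aux, Matrix.vecHead, Matrix.vecTail, Matrix.one_apply]

private lemma alphaDot_eq (x : Fin 3 → ℝ) : alphaDot x =
    !![0, 0, (x 2 : ℂ), (x 0 : ℂ) - Complex.I * (x 1 : ℂ);
       0, 0, (x 0 : ℂ) + Complex.I * (x 1 : ℂ), -(x 2 : ℂ);
       (x 2 : ℂ), (x 0 : ℂ) - Complex.I * (x 1 : ℂ), 0, 0;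
       (x 0 : ℂ) + Complex.I * (x 1 : ℂ), -(x 2 : ℂ), 0, 0] := by
  rw [alphaDot, dA0_eq, dA1_eq, dA2_eq]
  ext i j
  fin_cases i <;> fin_cases j <;> simp [Matrix.vecHead, Matrix.vecTail] <;> ring

private lemma gamma5_eq : gamma5 = !![0,0,1,0; 0,0,0,1; 1,0,0,0; 0,1,0,0] := by
  rw [gamma5, dA0_eq, dA1_eq, dA2_eq]
  ext i j
  fin_cases i <;> fin_cases j <;>
    simp [Matrix.mul_apply, Fin.sum_univ_succ, Matrix.vecHead, Matrix.vecTail]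

private lemma sDot_eq (x : Fin 3 → ℝ) : sDot x =
    !![-(x 2 : ℂ), -(x 0 : ℂ) + Complex.I * (x 1 : ℂ), 0, 0;
       -(x 0 : ℂ) - Complex.I * (x 1 : ℂ), (x 2 : ℂ), 0, 0;
       0, 0, -(x 2 : ℂ), -(x 0 : ℂ) + Complex.I * (x 1 : ℂ);
       0, 0, -(x 0 : ℂ) - Complex.I * (x 1 : ℂ), (x 2 : ℂ)] := by
  rw [sDot, gamma5_eq, alphaDot_eq]
  ext i j
  fin_cases i <;> fin_cases j <;>
    simp [Matrix.mul_apply, Fin.sum_univ_succ, Matrix.vecHead, Matrix.vecTail] <;> ring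

private lemma betaAlpha_eq (x : Fin 3 → ℝ) : diracBeta * alphaDot x =
    !![0, 0, (x 2 : ℂ), (x 0 : ℂ) - Complex.I * (x 1 : ℂ);
       0, 0, (x 0 : ℂ) + Complex.I * (x 1 : ℂ), -(x 2 : ℂ);
       -(x 2 : ℂ), -(x 0 : ℂ) + Complex.I * (x 1 : ℂ), 0, 0;
       -(x 0 : ℂ) - Complex.I * (x 1 : ℂ), (x 2 : ℂ), 0, 0] := by
  rw [betaM_eq, alphaDot_eq]
  ext i j
  fin_cases i <;> fin_cases j <;>
    simp [Matrix.mul_apply, Fin.sum_univ_succ, Matrix.vecHead, Matrix.vecTail] <;> ring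

-- STATEMENT 5
set_option maxHeartbeats 2000000 in
theorem stmt5 (ν τ : Fin 3 → ℝ) (hν : norm3 ν = 1) (hτν : inner3 τ ν = 0) (m : ℝ) :
    (sDot τ - (Complex.I * (m : ℂ)) • (diracBeta * alphaDot ν)) *
      (sDot τ - (Complex.I * (m : ℂ)) • (diracBeta * alphaDot ν)) =
      ((inner3 τ τ + m ^ 2 : ℝ) : ℂ) • 1 := by
  have hνν : (ν 0 : ℂ) ^ 2 + (ν 1 : ℂ) ^ 2 + (ν 2 : ℂ) ^ 2 = 1 := by
    have h0 : inner3 ν ν = 1 := by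
      have hnn : (0:ℝ) ≤ inner3 ν ν := by
        unfold inner3; nlinarith [sq_nonneg (ν 0), sq_nonneg (ν 1), sq_nonneg (ν 2)]
      have h2 : Real.sqrt (inner3 ν ν) = 1 := hν
      calc inner3 ν ν = Real.sqrt (inner3 ν ν) ^ 2 := (Real.sq_sqrt hnn).symm
        _ = 1 := by rw [h2]; norm_num
    have := congrArg (fun r : ℝ => (r : ℂ)) h0
    push_cast [inner3] at this
    linear_combination this
  have hτνC : (τ 0 : ℂ) * (ν 0 : ℂ) + (τ 1 : ℂ) * (ν 1 : ℂ) + (τ 2 : ℂ) * (ν 2 : ℂ) = 0 := by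
    have := congrArg (fun r : ℝ => (r : ℂ)) hτν
    push_cast [inner3] at this
    linear_combination this
  have hI : (Complex.I) ^ 2 = -1 := Complex.I_sq
  rw [sDot_eq, betaAlpha_eq]
  ext i j
  fin_cases i <;> fin_cases j <;>
    simp [Matrix.mul_apply, Fin.sum_univ_succ, Matrix.one_apply, inner3, Matrix.vecHead,
      Matrix.vecTail] <;>
    push_cast <;>
    first
    | ring1
    | linear_combination (m : ℂ) ^ 2 * hνν +
        (-(τ 1 : ℂ) ^ 2 - (m : ℂ) ^ 2 * (ν 0 : ℂ) ^ 2 - (m : ℂ) ^ 2 * (ν 2 : ℂ) ^ 2 +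
          (m : ℂ) ^ 2 * (ν 1 : ℂ) ^ 2 * (Complex.I ^ 2 - 1)) * hI
    | linear_combination 2 * Complex.I * (m : ℂ) * hτνC -
        2 * Complex.I * (m : ℂ) * (τ 1 : ℂ) * (ν 1 : ℂ) * hI
    | linear_combination (-2) * Complex.I * (m : ℂ) * hτνC +
        2 * Complex.I * (m : ℂ) * (τ 1 : ℂ) * (ν 1 : ℂ) * hI

end
end

section
/- Assume in addition that the third component of ξ vanishes (ξ₃ = 0) and the third component ν₃ of ν is positive. Then λ ≥ ν₃ √(1 + |ξ|²); equivalently Re ρ₊ ≥ (ν₃/s)√(1 + |ξ|²) and Re ρ₋ ≤ −(ν₃/s)√(1 + |ξ|²) (ellipticity of the eigenvalues of L₀). -/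
open Matrix Complex

noncomputable section

-- STATEMENT 9
theorem stmt9 (ν ξ : Fin 3 → ℝ) (s : ℝ) (hν : norm3 ν = 1) (hs : 0 < s)
    (hξ3 : ξ 2 = 0) (hν3 : 0 < ν 2) :
    lam ν ξ ≥ ν 2 * Real.sqrt (1 + inner3 ξ ξ) ∧
    (rhoP ν ξ s).re ≥ (ν 2 / s) * Real.sqrt (1 + inner3 ξ ξ) ∧
    (rhoM ν ξ s).re ≤ -((ν 2 / s) * Real.sqrt (1 + inner3 ξ ξ)) := by
  have h1 : inner3 ν ν = 1 := by
    have h0 : (0:ℝ) ≤ inner3 ν ν := by unfold inner3; nlinarith [mul_self_nonneg (ν 0), mul_self_nonneg (ν 1), mul_self_nonneg (ν 2)]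
    have := hν
    unfold norm3 at this
    nlinarith [Real.sq_sqrt h0, this]
  have hξnn : (0:ℝ) ≤ 1 + inner3 ξ ξ := by
    unfold inner3; nlinarith [mul_self_nonneg (ξ 0), mul_self_nonneg (ξ 1), mul_self_nonneg (ξ 2)]
  have key : (ν 2)^2 * (1 + inner3 ξ ξ) ≤ inner3 (cross3 ν ξ) (cross3 ν ξ) + 1 := by
    unfold inner3 cross3 at *
    simp only [Matrix.cons_val_zero, Matrix.cons_val_one, Matrix.head_cons, Matrix.cons_val_two, Matrix.tail_cons] at *
    rw [hξ3]
    nlinarith [mul_self_nonneg (ν 0 * ξ 1 - ν 1 * ξ 0), mul_self_nonneg (ν 0), mul_self_nonneg (ν 1), h1]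
  have hlam : lam ν ξ ≥ ν 2 * Real.sqrt (1 + inner3 ξ ξ) := by
    have heq : ν 2 * Real.sqrt (1 + inner3 ξ ξ) = Real.sqrt ((ν 2)^2 * (1 + inner3 ξ ξ)) := by
      rw [Real.sqrt_mul (sq_nonneg _), Real.sqrt_sq hν3.le]
    rw [heq]
    exact Real.sqrt_le_sqrt key
  have hre : (rhoP ν ξ s).re = lam ν ξ / s := by
    unfold rhoP
    rw [Complex.div_ofReal_re]
    simp
  have hreM : (rhoM ν ξ s).re = -(lam ν ξ) / s := by
    unfold rhoM
    rw [Complex.div_ofReal_re]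
    simp [sub_eq_add_neg]
  refine ⟨hlam, ?_, ?_⟩
  · rw [hre, ge_iff_le, div_mul_eq_mul_div]
    gcongr
  · rw [hreM, neg_div, div_mul_eq_mul_div, neg_le_neg_iff]
    gcongr


end
end

section
/- For every t ∈ ℂ, the matrix exponential satisfies exp(t L₀) = e^{t ρ₋} Π₋ + e^{t ρ₊} Π₊. -/
open Matrix Complex

noncomputable section

/-! With `τ = ν × ξ` and `M = S·τ − iβ(α·ν)`, the Clifford relations of the Dirac matrices give
`s L₀ = i⟨ν,ξ⟩ + M` and, since `τ ⊥ ν` and `|ν| = 1`, `M² = |τ|² + 1 = λ²`. So `N = λ⁻¹M` is an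
involution, `Π∓ = (1 ∓ N)/2` are complementary idempotents, and `t L₀ = tρ₋ Π₋ + tρ₊ Π₊`. The
exponential of `a Π₋ + b Π₊` is `eᵃ Π₋ + eᵇ Π₊` because `(a, b) ↦ a Π₋ + b Π₊` is a continuous ring
homomorphism `ℂ × ℂ → M₄(ℂ)`, and continuous ring homomorphisms commute with `exp`. -/

section Idempotent

variable {𝕂 A : Type*}

def IsIdempotentElem.prodRingHom [CommSemiring 𝕂] [Ring A] [Algebra 𝕂 A] {P : A}
    (hP : IsIdempotentElem P) : 𝕂 × 𝕂 →+* A where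
  toFun p := p.1 • P + p.2 • (1 - P)
  map_one' := by simp
  map_mul' p q := by
    simp only [Prod.fst_mul, Prod.snd_mul, add_mul, mul_add, smul_mul_smul_comm, hP.eq,
      hP.mul_one_sub_self, hP.one_sub_mul_self, hP.one_sub.eq, smul_zero, add_zero, zero_add]
  map_zero' := by simp
  map_add' p q := by simp only [Prod.fst_add, Prod.snd_add, add_smul]; abel

theorem IsIdempotentElem.exp_smul_add_smul_one_sub [RCLike 𝕂] [NormedRing A] [NormedAlgebra 𝕂 A]
    {P : A} (hP : IsIdempotentElem P) (a b : 𝕂) :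
    NormedSpace.exp (a • P + b • (1 - P)) =
      NormedSpace.exp a • P + NormedSpace.exp b • (1 - P) := by
  have hcont : Continuous (hP.prodRingHom (𝕂 := 𝕂)) :=
    (continuous_fst.smul continuous_const).add (continuous_snd.smul continuous_const)
  have hexp : NormedSpace.exp (a, b) = (NormedSpace.exp a, NormedSpace.exp b) :=
    Prod.ext (Prod.fst_exp _) (Prod.snd_exp _)
  calc NormedSpace.exp (a • P + b • (1 - P)) = NormedSpace.exp (hP.prodRingHom (a, b)) := rfl
    _ = hP.prodRingHom (NormedSpace.exp (a, b)) :=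
      (NormedSpace.map_exp_of_mem_ball (𝕂 := 𝕂) _ hcont _
        (by simp [NormedSpace.expSeries_radius_eq_top])).symm
    _ = NormedSpace.exp a • P + NormedSpace.exp b • (1 - P) := by rw [hexp]; rfl

theorem isIdempotentElem_half_smul_one_sub [Field 𝕂] [CharZero 𝕂] [Ring A] [Algebra 𝕂 A] {N : A}
    (hN : N * N = 1) : IsIdempotentElem ((1 / 2 : 𝕂) • (1 - N)) := by
  rw [IsIdempotentElem, smul_mul_smul_comm]
  simp only [sub_mul, mul_sub, one_mul, mul_one, hN]
  module

end Idempotent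

lemma inner3_comm (x y : Fin 3 → ℝ) : inner3 x y = inner3 y x := by
  simp only [inner3]; ring

lemma inner3_self_nonneg (x : Fin 3 → ℝ) : 0 ≤ inner3 x x :=
  add_nonneg (add_nonneg (mul_self_nonneg _) (mul_self_nonneg _)) (mul_self_nonneg _)

lemma norm3_sq (x : Fin 3 → ℝ) : norm3 x ^ 2 = inner3 x x :=
  Real.sq_sqrt (inner3_self_nonneg x)

lemma cross3_self (x : Fin 3 → ℝ) : cross3 x x = 0 := by
  ext i; fin_cases i <;> simp [cross3, mul_comm]

lemma inner3_cross3_left (x y : Fin 3 → ℝ) : inner3 (cross3 x y) x = 0 := by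
  simp [inner3, cross3]; ring

lemma lam_pos (ν ξ : Fin 3 → ℝ) : 0 < lam ν ξ :=
  Real.sqrt_pos.2 (by linarith [inner3_self_nonneg (cross3 ν ξ)])

lemma lam_sq (ν ξ : Fin 3 → ℝ) : lam ν ξ ^ 2 = inner3 (cross3 ν ξ) (cross3 ν ξ) + 1 :=
  Real.sq_sqrt (by linarith [inner3_self_nonneg (cross3 ν ξ)])

def pauliDot (x : Fin 3 → ℝ) : Matrix (Fin 2) (Fin 2) ℂ :=
  (x 0 : ℂ) • sigma1 + (x 1 : ℂ) • sigma2 + (x 2 : ℂ) • sigma3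

lemma pauliDot_mul_pauliDot (x y : Fin 3 → ℝ) :
    pauliDot x * pauliDot y = (inner3 x y : ℂ) • 1 + I • pauliDot (cross3 x y) := by
  ext i j; fin_cases i <;> fin_cases j <;>
    simp [pauliDot, sigma1, sigma2, sigma3, inner3, cross3, Matrix.mul_apply, Fin.sum_univ_two] <;>
    ring_nf <;> simp [I_sq] <;> ring

lemma pauliDot_cross3_swap (x y : Fin 3 → ℝ) :
    pauliDot (cross3 y x) = -pauliDot (cross3 x y) := by
  simp only [pauliDot, cross3]; push_cast; module

def blockAlgEquiv : Matrix (Fin 2 ⊕ Fin 2) (Fin 2 ⊕ Fin 2) ℂ ≃ₐ[ℂ] Matrix (Fin 4) (Fin 4) ℂ :=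
  reindexAlgEquiv ℂ ℂ finSumFinEquiv

lemma diracAlpha_eq_blocks (j : Fin 3) :
    diracAlpha j = blockAlgEquiv
      (fromBlocks 0 (![sigma1, sigma2, sigma3] j) (![sigma1, sigma2, sigma3] j) 0) := by
  fin_cases j <;> rfl

lemma diracBeta_eq_blocks : diracBeta = blockAlgEquiv (fromBlocks 1 0 0 (-1)) := rfl

lemma alphaDot_eq_blocks (x : Fin 3 → ℝ) :
    alphaDot x = blockAlgEquiv (fromBlocks 0 (pauliDot x) (pauliDot x) 0) := by
  simp only [alphaDot, diracAlpha_eq_blocks, ← map_smul, ← map_add, fromBlocks_smul,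
    fromBlocks_add, pauliDot]
  simp

lemma gamma5_eq_blocks : gamma5 = blockAlgEquiv (fromBlocks 0 1 1 0) := by
  have hσ : sigma1 * sigma2 * sigma3 = I • 1 := by
    ext i j; fin_cases i <;> fin_cases j <;> simp [sigma1, sigma2, sigma3]
  simp [gamma5, diracAlpha_eq_blocks, ← map_mul, ← map_smul, fromBlocks_multiply, hσ,
    fromBlocks_smul, fromBlocks_neg, smul_smul]

lemma sDot_eq_blocks (x : Fin 3 → ℝ) :
    sDot x = blockAlgEquiv (fromBlocks (-pauliDot x) 0 0 (-pauliDot x)) := by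
  simp [sDot, gamma5_eq_blocks, alphaDot_eq_blocks, ← map_mul, ← map_neg, fromBlocks_multiply,
    fromBlocks_neg]

lemma alphaDot_mul_alphaDot (x y : Fin 3 → ℝ) :
    alphaDot x * alphaDot y = (inner3 x y : ℂ) • 1 - I • sDot (cross3 x y) := by
  rw [alphaDot_eq_blocks, alphaDot_eq_blocks, sDot_eq_blocks, ← map_mul, fromBlocks_multiply,
    ← map_one blockAlgEquiv, ← map_smul, ← map_smul, ← map_sub, ← fromBlocks_one,
    fromBlocks_smul, fromBlocks_smul, sub_eq_add_neg, fromBlocks_neg, fromBlocks_add,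
    pauliDot_mul_pauliDot]
  simp

lemma alphaDot_mul_diracBeta (x : Fin 3 → ℝ) :
    alphaDot x * diracBeta = -(diracBeta * alphaDot x) := by
  rw [alphaDot_eq_blocks, diracBeta_eq_blocks, ← map_mul, ← map_mul, ← map_neg,
    fromBlocks_multiply, fromBlocks_multiply, fromBlocks_neg]
  simp

lemma diracBeta_mul_self : diracBeta * diracBeta = 1 := by
  rw [diracBeta_eq_blocks, ← map_mul, fromBlocks_multiply, ← map_one blockAlgEquiv,
    ← fromBlocks_one]
  simp

lemma sDot_mul_self (x : Fin 3 → ℝ) : sDot x * sDot x = (inner3 x x : ℂ) • 1 := by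
  rw [sDot_eq_blocks, ← map_mul, fromBlocks_multiply, ← map_one blockAlgEquiv, ← map_smul,
    ← fromBlocks_one, fromBlocks_smul]
  simp only [mul_zero, zero_mul, add_zero, zero_add, neg_mul_neg, pauliDot_mul_pauliDot,
    cross3_self]
  simp [pauliDot]

lemma sDot_mul_diracBeta_mul_alphaDot (u x : Fin 3 → ℝ) (h : inner3 u x = 0) :
    sDot u * (diracBeta * alphaDot x) = -(diracBeta * alphaDot x * sDot u) := by
  rw [sDot_eq_blocks, diracBeta_eq_blocks, alphaDot_eq_blocks]
  simp only [← map_mul, ← map_neg, fromBlocks_multiply, fromBlocks_neg]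
  simp [pauliDot_mul_pauliDot, pauliDot_cross3_swap x u, inner3_comm x u, h]
lemma alphaDot_mul_self (x : Fin 3 → ℝ) : alphaDot x * alphaDot x = (inner3 x x : ℂ) • 1 := by
  rw [alphaDot_mul_alphaDot, cross3_self]
  simp [sDot, alphaDot]

lemma diracBeta_alphaDot_mul_self (x : Fin 3 → ℝ) :
    diracBeta * alphaDot x * (diracBeta * alphaDot x) = -((inner3 x x : ℂ) • 1) :=
  calc diracBeta * alphaDot x * (diracBeta * alphaDot x)
      = diracBeta * (alphaDot x * diracBeta) * alphaDot x := by noncomm_ring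
    _ = -((inner3 x x : ℂ) • 1) := by
      rw [alphaDot_mul_diracBeta, mul_neg, neg_mul, ← mul_assoc, diracBeta_mul_self, one_mul,
        alphaDot_mul_self]

lemma sDot_sub_I_smul_diracBeta_alphaDot_mul_self (u x : Fin 3 → ℝ) (h : inner3 u x = 0) :
    (sDot u - I • (diracBeta * alphaDot x)) * (sDot u - I • (diracBeta * alphaDot x)) =
      ((inner3 u u + inner3 x x : ℝ) : ℂ) • 1 := by
  simp only [sub_mul, mul_sub, smul_mul_assoc, mul_smul_comm,
    sDot_mul_diracBeta_mul_alphaDot u x h, sDot_mul_self, diracBeta_alphaDot_mul_self]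
  push_cast
  match_scalars
  · linear_combination -(inner3 x x : ℂ) * I_mul_I
  · ring

lemma L0_eq (ν ξ : Fin 3 → ℝ) (s : ℝ) :
    L0 ν ξ s = (s : ℂ)⁻¹ •
      ((I * inner3 ν ξ) • 1 + (sDot (cross3 ν ξ) - I • (diracBeta * alphaDot ν))) := by
  rw [L0, smul_mul_assoc, mul_add, alphaDot_mul_alphaDot, alphaDot_mul_diracBeta]
  simp only [smul_sub, smul_add, smul_smul, smul_neg, I_mul_I, neg_one_smul]
  module

theorem stmt13_general (ν ξ : Fin 3 → ℝ) (s : ℝ) (hν : norm3 ν = 1) (t : ℂ) :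
    NormedSpace.exp (t • L0 ν ξ s) =
      Complex.exp (t * rhoM ν ξ s) • Piminus ν ξ
        + Complex.exp (t * rhoP ν ξ s) • Piplus ν ξ := by
  -- `exp` only sees the topology, so any submultiplicative norm on matrices will do.
  let _ : NormedRing (Matrix (Fin 4) (Fin 4) ℂ) := Matrix.linftyOpNormedRing
  let _ : NormedAlgebra ℂ (Matrix (Fin 4) (Fin 4) ℂ) := Matrix.linftyOpNormedAlgebra
  set M := sDot (cross3 ν ξ) - I • (diracBeta * alphaDot ν) with hM
  have hlam : (lam ν ξ : ℂ) ≠ 0 := ofReal_ne_zero.2 (lam_pos ν ξ).ne'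
  have hMM : M * M = ((lam ν ξ ^ 2 : ℝ) : ℂ) • 1 := by
    rw [sDot_sub_I_smul_diracBeta_alphaDot_mul_self _ _ (inner3_cross3_left ν ξ), ← norm3_sq ν,
      hν, lam_sq, one_pow]
  have hNN : ((lam ν ξ : ℂ)⁻¹ • M) * ((lam ν ξ : ℂ)⁻¹ • M) = 1 := by
    rw [smul_mul_smul_comm, hMM, smul_smul]; push_cast; field_simp; simp
  have hPi : Piplus ν ξ = 1 - Piminus ν ξ := by rw [Piplus, Piminus]; module
  have hL : t • L0 ν ξ s =
      (t * rhoM ν ξ s) • Piminus ν ξ + (t * rhoP ν ξ s) • (1 - Piminus ν ξ) := by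
    rw [L0_eq, ← hPi, Piminus, Piplus, rhoM, rhoP, ← hM]
    match_scalars <;> field_simp <;> ring
  rw [hL, hPi, Complex.exp_eq_exp_ℂ]
  exact (isIdempotentElem_half_smul_one_sub hNN).exp_smul_add_smul_one_sub _ _

theorem stmt13 (ν ξ : Fin 3 → ℝ) (s : ℝ) (hν : norm3 ν = 1) (hs : 0 < s) (t : ℂ) :
    NormedSpace.exp (t • L0 ν ξ s) =
      Complex.exp (t * rhoM ν ξ s) • Piminus ν ξ
        + Complex.exp (t * rhoP ν ξ s) • Piplus ν ξ :=
  stmt13_general ν ξ s hν t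
end
end

section
/- For all x ∈ ℝ³∖{0}, the conjugate transpose of the fundamental solution satisfies (φ_{m,z,w}(−x))ᴴ = φ_{m, conj(z), −conj(w)}(x). (Note (−conj(w))² = conj(z)² − m², so the right-hand side is a well-defined instance of the fundamental solution; moreover if Im w > 0 then Im(−conj(w)) > 0, consistent with the branch convention Im√(z²−m²) > 0.) -/
open Matrix Complex

noncomputable section

lemma norm3_neg (x : Fin 3 → ℝ) : norm3 (-x) = norm3 x := by
  simp only [norm3, inner3, Pi.neg_apply]; ring_nf

lemma alphaDot_neg (x : Fin 3 → ℝ) : alphaDot (-x) = -alphaDot x := by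
  simp only [alphaDot, Pi.neg_apply, Complex.ofReal_neg, neg_smul, neg_add]

lemma sigma1_herm : sigma1ᴴ = sigma1 := by
  ext i j; fin_cases i <;> fin_cases j <;> simp [sigma1]

lemma sigma2_herm : sigma2ᴴ = sigma2 := by
  ext i j; fin_cases i <;> fin_cases j <;> simp [sigma2]

lemma sigma3_herm : sigma3ᴴ = sigma3 := by
  ext i j; fin_cases i <;> fin_cases j <;> simp [sigma3]

lemma diracAlpha_herm (j : Fin 3) : (diracAlpha j)ᴴ = diracAlpha j := by
  fin_cases j <;>
    simp [diracAlpha, Matrix.conjTranspose_reindex, Matrix.fromBlocks_conjTranspose,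
      sigma1_herm, sigma2_herm, sigma3_herm]

lemma alphaDot_herm (x : Fin 3 → ℝ) : (alphaDot x)ᴴ = alphaDot x := by
  simp [alphaDot, Matrix.conjTranspose_add, Matrix.conjTranspose_smul, diracAlpha_herm,
    Complex.star_def, Complex.conj_ofReal]

lemma beta_herm : diracBetaᴴ = diracBeta := by
  simp [diracBeta, Matrix.conjTranspose_reindex, Matrix.fromBlocks_conjTranspose]

-- STATEMENT 16
theorem stmt16 (m : ℝ) (hm : 0 < m) (z w : ℂ) (hw : w ^ 2 = z ^ 2 - (m : ℂ) ^ 2)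
    (x : Fin 3 → ℝ) (hx : x ≠ 0) :
    (phiFS m z w (-x))ᴴ = phiFS m (starRingEnd ℂ z) (-(starRingEnd ℂ w)) x := by
  have hc : (starRingEnd ℂ) (Complex.exp (Complex.I * w * (norm3 x : ℂ)) /
      (4 * (Real.pi : ℂ) * (norm3 x : ℂ))) =
      Complex.exp (Complex.I * -(starRingEnd ℂ) w * (norm3 x : ℂ)) /
      (4 * (Real.pi : ℂ) * (norm3 x : ℂ)) := by
    rw [map_div₀, ← Complex.exp_conj]
    simp only [_root_.map_mul, Complex.conj_I, Complex.conj_ofReal, map_ofNat]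
    ring_nf
  have hd : -((starRingEnd ℂ) ((1 - Complex.I * w * (norm3 x : ℂ)) * Complex.I /
      ((norm3 x : ℂ) ^ 2))) =
      (1 - Complex.I * -(starRingEnd ℂ) w * (norm3 x : ℂ)) * Complex.I /
      ((norm3 x : ℂ) ^ 2) := by
    rw [map_div₀, _root_.map_mul, _root_.map_sub, _root_.map_one, _root_.map_mul, _root_.map_mul, map_pow]
    simp only [Complex.conj_I, Complex.conj_ofReal]
    ring
  simp only [phiFS, norm3_neg, alphaDot_neg, Matrix.conjTranspose_smul,
    Matrix.conjTranspose_add, Matrix.conjTranspose_neg, Matrix.conjTranspose_one,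
    alphaDot_herm, beta_herm, smul_neg, ← neg_smul, Complex.star_def, Complex.conj_ofReal,
    _root_.map_neg, hc, hd]

end
end
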